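/- Let m ≥ 1, u ≥ 1, j, j' be integers with 0 ≤ j ≤ m, 0 ≤ j' ≤ um, j' ≡ j (mod 2), and suppose j ≤ j' and either (u is even and j' ≤ um − j) or (u is odd and j' ≤ um − (m − j)). Then the strict inequality −φ(m,j,(j'−j)/2) < min( −φ(m,j,−(j'+j)/2 − 1), u − φ(m,j,−(j'+j)/2 + 1) ) holds. -/

import Mathlib

/-!
Write `f = -φ(m,j,·)`. Euclidean division gives `f(mq + r) = q(mq + 2r + j) + max r (2r + j - m)`,
and this closed form stays valid at `r = m`. Two consequences drive the proof: `f` is symmetric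
about `-j/2`, i.e. `f(-k - j) = f(k)`, and its increment `f(mq + r + 1) - f(mq + r)` is `2q + 1` or
`2q + 2`. With `a = (j' - j)/2`, symmetry turns the two arguments on the right into `a + 1` and
`a - 1`. The first inequality is then `f(a) < f(a + 1)`, true because `a ≥ 0`, and the second says
that the increment `f(a) - f(a - 1)` is less than `u`, which is exactly what the upper bound on `j'`
guarantees.
-/

/-- The δ-coefficient function `φ(m,j,k)` for type `A₁⁽¹⁾`: writing `k = m*q + r` by
Euclidean division (`0 ≤ r < m` when `1 ≤ m`), set `φ(m,j,k) = -q*(k+r+j) - r` if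
`0 ≤ r ≤ m - j`, and `φ(m,j,k) = -q*(k+r+j) + m - j - 2*r` if `m - j ≤ r < m`
(the two expressions agree at `r = m - j`). -/
def phi (m j k : ℤ) : ℤ :=
  -(k.ediv m) * (k + k.emod m + j) +
    (if k.emod m ≤ m - j then -(k.emod m) else m - j - 2 * (k.emod m))

section

variable {m j : ℤ}

lemma exists_mul_add_eq (hm : 0 < m) (k : ℤ) : ∃ q r, 0 ≤ r ∧ r < m ∧ m * q + r = k :=
  ⟨k / m, k % m, Int.emod_nonneg k hm.ne', Int.emod_lt_of_pos k hm, Int.mul_ediv_add_emod k m⟩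

lemma phi_mul_add_of_lt (q : ℤ) {r : ℤ} (hr0 : 0 ≤ r) (hrm : r < m) :
    phi m j (m * q + r) = -q * (m * q + 2 * r + j) - max r (2 * r + j - m) := by
  obtain ⟨hdiv, hmod⟩ : (m * q + r).ediv m = q ∧ (m * q + r).emod m = r :=
    (Int.ediv_emod_unique (by omega)).mpr ⟨by ring, hr0, hrm⟩
  simp only [phi, hdiv, hmod, max_def]
  split_ifs <;> linarith

lemma phi_mul_add (hm : 0 < m) (hj0 : 0 ≤ j) (hjm : j ≤ m) (q : ℤ) {r : ℤ} (hr0 : 0 ≤ r)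
    (hrm : r ≤ m) :
    phi m j (m * q + r) = -q * (m * q + 2 * r + j) - max r (2 * r + j - m) := by
  rcases hrm.lt_or_eq with hrm | hrm
  · exact phi_mul_add_of_lt q hr0 hrm
  · rw [hrm, show m * q + m = m * (q + 1) + 0 by ring, phi_mul_add_of_lt (q + 1) le_rfl hm,
      max_eq_left (by omega), max_eq_right (by omega)]
    ring

lemma phi_neg_sub (hm : 0 < m) (hj0 : 0 ≤ j) (hjm : j ≤ m) (k : ℤ) :
    phi m j (-k - j) = phi m j k := by
  obtain ⟨q, r, hr0, hrm, rfl⟩ := exists_mul_add_eq hm k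
  rw [phi_mul_add hm hj0 hjm q hr0 hrm.le]
  rcases le_or_gt (r + j) m with h | h
  · rw [show -(m * q + r) - j = m * (-q - 1) + (m - r - j) by ring,
      phi_mul_add hm hj0 hjm _ (by omega) (by omega), max_eq_left (by omega),
      max_eq_left (by omega)]
    ring
  · rw [show -(m * q + r) - j = m * (-q - 2) + (2 * m - r - j) by ring,
      phi_mul_add hm hj0 hjm _ (by omega) (by omega), max_eq_right (by omega),
      max_eq_right (by omega)]
    ring

lemma phi_mul_add_sub_phi_add_one (hm : 0 < m) (hj0 : 0 ≤ j) (hjm : j ≤ m) (q : ℤ) {r : ℤ}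
    (hr0 : 0 ≤ r) (hrm : r < m) :
    phi m j (m * q + r) - phi m j (m * q + r + 1) = if r + j < m then 2 * q + 1 else 2 * q + 2 := by
  rw [add_assoc (m * q) r 1, phi_mul_add hm hj0 hjm q hr0 hrm.le,
    phi_mul_add hm hj0 hjm q (r := r + 1) (by omega) (by omega), max_def, max_def]
  split_ifs <;> linarith

lemma phi_add_one_lt (hm : 0 < m) (hj0 : 0 ≤ j) (hjm : j ≤ m) {k : ℤ} (hk : 0 ≤ k) :
    phi m j (k + 1) < phi m j k := by
  obtain ⟨q, r, hr0, hrm, rfl⟩ := exists_mul_add_eq hm k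
  have hq : 0 ≤ q := by nlinarith
  have := phi_mul_add_sub_phi_add_one hm hj0 hjm q hr0 hrm
  split_ifs at this <;> linarith

lemma phi_sub_one_sub_phi_lt_of_add_le (hm : 0 < m) (hj0 : 0 ≤ j) (hjm : j ≤ m) {k v : ℤ}
    (h : k + j ≤ v * m) : phi m j (k - 1) - phi m j k < 2 * v := by
  obtain ⟨q, r, hr0, hrm, hk⟩ := exists_mul_add_eq hm (k - 1)
  have := phi_mul_add_sub_phi_add_one hm hj0 hjm q hr0 hrm
  rw [hk, sub_add_cancel] at this
  split_ifs at this
  · have : q < v := by nlinarith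
    linarith
  · have : q + 1 < v := by nlinarith
    linarith

lemma phi_sub_one_sub_phi_lt_of_le (hm : 0 < m) (hj0 : 0 ≤ j) (hjm : j ≤ m) {k v : ℤ}
    (h : k ≤ v * m) : phi m j (k - 1) - phi m j k < 2 * v + 1 := by
  obtain ⟨q, r, hr0, hrm, hk⟩ := exists_mul_add_eq hm (k - 1)
  have := phi_mul_add_sub_phi_add_one hm hj0 hjm q hr0 hrm
  rw [hk, sub_add_cancel] at this
  have hqv : q < v := by nlinarith
  split_ifs at this <;> linarith

end

theorem phi_strict_inequality_general (m u j j' : ℤ) (hm : 1 ≤ m)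
    (hj0 : 0 ≤ j) (hjm : j ≤ m)
    (hpar : 2 ∣ j' - j) (hjj' : j ≤ j')
    (hcase : (Even u ∧ j' ≤ u * m - j) ∨ (Odd u ∧ j' ≤ u * m - (m - j))) :
    -phi m j ((j' - j) / 2) <
      min (-phi m j (-((j' + j) / 2) - 1)) (u - phi m j (-((j' + j) / 2) + 1)) := by
  obtain ⟨a, ha⟩ := hpar
  have hm : 0 < m := hm
  rw [show (j' - j) / 2 = a by omega, show -((j' + j) / 2) - 1 = -(a + 1) - j by omega,
    show -((j' + j) / 2) + 1 = -(a - 1) - j by omega, phi_neg_sub hm hj0 hjm,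
    phi_neg_sub hm hj0 hjm, lt_min_iff]
  refine ⟨neg_lt_neg (phi_add_one_lt hm hj0 hjm (by omega)), ?_⟩
  rcases hcase with ⟨⟨v, rfl⟩, hle⟩ | ⟨⟨v, rfl⟩, hle⟩
  · have := phi_sub_one_sub_phi_lt_of_add_le hm hj0 hjm (k := a) (v := v) (by linarith)
    linarith
  · have := phi_sub_one_sub_phi_lt_of_le hm hj0 hjm (k := a) (v := v) (by linarith)
    linarith

/-- Arithmetic core of Theorem 1.2 of the paper: for `m, u ≥ 1`, `0 ≤ j ≤ m`,
`0 ≤ j' ≤ um`, `j' ≡ j (mod 2)`, with `j ≤ j'` and either (`u` even and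
`j' ≤ um − j`) or (`u` odd and `j' ≤ um − (m − j)`), the strict inequality
`−φ(m,j,(j'−j)/2) < min(−φ(m,j,−(j'+j)/2 − 1), u − φ(m,j,−(j'+j)/2 + 1))` holds. -/
theorem phi_strict_inequality (m u j j' : ℤ) (hm : 1 ≤ m) (hu : 1 ≤ u)
    (hj0 : 0 ≤ j) (hjm : j ≤ m) (hj'0 : 0 ≤ j') (hj'um : j' ≤ u * m)
    (hpar : 2 ∣ j' - j) (hjj' : j ≤ j')
    (hcase : (Even u ∧ j' ≤ u * m - j) ∨ (Odd u ∧ j' ≤ u * m - (m - j))) :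
    -phi m j ((j' - j) / 2) <
      min (-phi m j (-((j' + j) / 2) - 1)) (u - phi m j (-((j' + j) / 2) + 1)) :=
  phi_strict_inequality_general m u j j' hm hj0 hjm hpar hjj' hcase
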